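/- Let θ ∈ (0,π], let x, y : ℂ with (x,y) ≠ (0,0), and let λ > 0. Set Ψ_{x,y} = x•Ψ₁ + y•Ψ₂, where Ψ₁ = (e₀⊗e₀ − e₂⊗e₂)/√2 and Ψ₂ = (e₁⊗e₁ − e₃⊗e₃)/√2. Then the matrix W_II(θ) − λ·|Ψ_{x,y}⟩⟨Ψ_{x,y}| is not block positive: there exist u,v : Fin 4 → ℂ with Re⟨u⊗v, (W_II(θ) − λ|Ψ_{x,y}⟩⟨Ψ_{x,y}|)(u⊗v)⟩ < 0. -/
import Mathlib


open Matrix Complex Real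
set_option maxHeartbeats 1000000

/-- The tensor (product) vector `x ⊗ y` in `ℂ¹⁶`. -/
noncomputable def tensorVec (x y : Fin 4 → ℂ) : Fin 4 × Fin 4 → ℂ :=
  fun p => x p.1 * y p.2

/-- The expectation `⟨v, W v⟩ = ∑ i, conj (v i) * (W *ᵥ v) i`. -/
noncomputable def expec (W : Matrix (Fin 4 × Fin 4) (Fin 4 × Fin 4) ℂ)
    (v : Fin 4 × Fin 4 → ℂ) : ℂ :=
  ∑ i, star (v i) * W.mulVec v i

/-- The Bell-diagonal matrix `W[a,b,c,d]` with `(α₀,α₁,α₂,α₃) = (a,b,c,d)`: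
`W((k,m),(k',m')) = α_{(m−k) mod 4}` if `k=k', m=m'`; `−1` if `k=m, k'=m', k≠k'`;
`0` otherwise. -/
noncomputable def Wabcd (a b c d : ℝ) : Matrix (Fin 4 × Fin 4) (Fin 4 × Fin 4) ℂ :=
  fun p q =>
    if p.1 = q.1 ∧ p.2 = q.2 then ((![a, b, c, d] (p.2 - p.1) : ℝ) : ℂ)
    else if p.1 = p.2 ∧ q.1 = q.2 ∧ p.1 ≠ q.1 then -1
    else 0

/-- The class-I witness `W_I(θ)`. -/
noncomputable def WI (θ : ℝ) : Matrix (Fin 4 × Fin 4) (Fin 4 × Fin 4) ℂ :=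
  Wabcd ((2 - Real.sin θ) / 2) ((1 + Real.cos θ) / 2)
        (2 - (2 - Real.sin θ) / 2) (1 - (1 + Real.cos θ) / 2)

/-- The class-II witness `W_II(θ)`. -/
noncomputable def WII (θ : ℝ) : Matrix (Fin 4 × Fin 4) (Fin 4 × Fin 4) ℂ :=
  Wabcd ((1 + Real.cos θ) / 2) ((2 - Real.sin θ) / 2)
        (1 - (1 + Real.cos θ) / 2) (2 - (2 - Real.sin θ) / 2)

/-- The maximally entangled vector `Ψ(j,j') = (−1)^{j+1}/2` if `j = j'`, else `0`. -/
noncomputable def PsiVec : Fin 4 × Fin 4 → ℂ :=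
  fun p => if p.1 = p.2 then ((-1 : ℂ) ^ ((p.1 : ℕ) + 1)) / 2 else 0

/-- The rank-one projector `P = |Ψ⟩⟨Ψ|`. -/
noncomputable def Pmat : Matrix (Fin 4 × Fin 4) (Fin 4 × Fin 4) ℂ :=
  fun u v => PsiVec u * star (PsiVec v)

/-- `Ψ₁ = (|0⊗0⟩ − |2⊗2⟩)/√2`. -/
noncomputable def Psi1 : Fin 4 × Fin 4 → ℂ :=
  fun p => if p = ((0 : Fin 4), (0 : Fin 4)) then (1 : ℂ) / Real.sqrt 2
    else if p = ((2 : Fin 4), (2 : Fin 4)) then -(1 : ℂ) / Real.sqrt 2 else 0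

/-- `Ψ₂ = (|1⊗1⟩ − |3⊗3⟩)/√2`. -/
noncomputable def Psi2 : Fin 4 × Fin 4 → ℂ :=
  fun p => if p = ((1 : Fin 4), (1 : Fin 4)) then (1 : ℂ) / Real.sqrt 2
    else if p = ((3 : Fin 4), (3 : Fin 4)) then -(1 : ℂ) / Real.sqrt 2 else 0

/-- The rank-one matrix `|Φ⟩⟨Φ|`. -/
noncomputable def outer (Φ : Fin 4 × Fin 4 → ℂ) :
    Matrix (Fin 4 × Fin 4) (Fin 4 × Fin 4) ℂ :=
  fun p q => Φ p * star (Φ q)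

/-! ### Auxiliary lemmas -/

lemma expec_sub_smul (A B : Matrix (Fin 4 × Fin 4) (Fin 4 × Fin 4) ℂ) (c : ℂ)
    (w : Fin 4 × Fin 4 → ℂ) :
    expec (A - c • B) w = expec A w - c * expec B w := by
  unfold expec
  simp only [Matrix.sub_mulVec, Matrix.smul_mulVec, Pi.sub_apply, Pi.smul_apply,
    smul_eq_mul, mul_sub, Finset.sum_sub_distrib, Finset.mul_sum]
  congr 1
  apply Finset.sum_congr rfl
  intros
  ring

lemma Wabcd_eval_x (a b c d p e : ℝ) :
    expec (Wabcd a b c d)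
      (tensorVec ![0, (p:ℂ), (e:ℂ), 1] ![0, 1, (e:ℂ), (p:ℂ)])
    = ((2*a*p^2 + a*e^4 + 2*b*p^2*e^2 + c*p^4 + c + 2*d*e^2 - 2*p^2 - 4*p*e^2 : ℝ) : ℂ) := by
  simp [expec, Wabcd, tensorVec, Matrix.mulVec, dotProduct, Fintype.sum_prod_type,
    Fin.sum_univ_four, show ((-3:Fin 4))=1 by decide, show ((-2:Fin 4))=2 by decide,
    show ((-1:Fin 4))=3 by decide]
  push_cast
  ring

lemma Wabcd_eval_y (a b c d p e : ℝ) :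
    expec (Wabcd a b c d)
      (tensorVec ![1, 0, (p:ℂ), (e:ℂ)] ![(p:ℂ), 0, 1, (e:ℂ)])
    = ((2*a*p^2 + a*e^4 + 2*b*p^2*e^2 + c*p^4 + c + 2*d*e^2 - 2*p^2 - 4*p*e^2 : ℝ) : ℂ) := by
  simp [expec, Wabcd, tensorVec, Matrix.mulVec, dotProduct, Fintype.sum_prod_type,
    Fin.sum_univ_four, show ((-3:Fin 4))=1 by decide, show ((-2:Fin 4))=2 by decide,
    show ((-1:Fin 4))=3 by decide]
  push_cast
  ring

lemma outer_eval_x (x y : ℂ) (p e : ℝ) :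
    expec (outer (x • Psi1 + y • Psi2))
      (tensorVec ![0, (p:ℂ), (e:ℂ), 1] ![0, 1, (e:ℂ), (p:ℂ)])
    = ((Complex.normSq x : ℝ) : ℂ) * (e:ℂ)^4 / 2 := by
  have h2 : (Real.sqrt 2 : ℂ) ^ 2 = 2 := by
    rw [← Complex.ofReal_pow, Real.sq_sqrt (by norm_num)]; norm_num
  rw [← Complex.mul_conj]
  simp [expec, outer, Psi1, Psi2, tensorVec, Matrix.mulVec, dotProduct,
    Fintype.sum_prod_type, Fin.sum_univ_four]
  have hi : ((Real.sqrt 2 : ℝ):ℂ)⁻¹ ^ 2 = (2:ℂ)⁻¹ := by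
    rw [inv_pow, h2]
  ring_nf
  rw [hi]
  ring_nf

lemma outer_eval_y (x y : ℂ) (p e : ℝ) :
    expec (outer (x • Psi1 + y • Psi2))
      (tensorVec ![1, 0, (p:ℂ), (e:ℂ)] ![(p:ℂ), 0, 1, (e:ℂ)])
    = ((Complex.normSq y : ℝ) : ℂ) * (e:ℂ)^4 / 2 := by
  have h2 : (Real.sqrt 2 : ℂ) ^ 2 = 2 := by
    rw [← Complex.ofReal_pow, Real.sq_sqrt (by norm_num)]; norm_num
  rw [← Complex.mul_conj]
  simp [expec, outer, Psi1, Psi2, tensorVec, Matrix.mulVec, dotProduct,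
    Fintype.sum_prod_type, Fin.sum_univ_four]
  have hi : ((Real.sqrt 2 : ℝ):ℂ)⁻¹ ^ 2 = (2:ℂ)⁻¹ := by
    rw [inv_pow, h2]
  ring_nf
  rw [hi]
  ring_nf

lemma comb_x (θ lam p e : ℝ) (x y : ℂ) :
    (expec (WII θ - (lam : ℂ) • outer (x • Psi1 + y • Psi2))
      (tensorVec ![0, (p:ℂ), (e:ℂ), 1] ![0, 1, (e:ℂ), (p:ℂ)])).re
    = 2*((1+Real.cos θ)/2)*p^2 + ((1+Real.cos θ)/2)*e^4
      + 2*((2-Real.sin θ)/2)*p^2*e^2 + (1-(1+Real.cos θ)/2)*p^4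
      + (1-(1+Real.cos θ)/2) + 2*(2-(2-Real.sin θ)/2)*e^2
      - 2*p^2 - 4*p*e^2 - lam * Complex.normSq x * e^4 / 2 := by
  rw [show WII θ = Wabcd ((1 + Real.cos θ) / 2) ((2 - Real.sin θ) / 2)
      (1 - (1 + Real.cos θ) / 2) (2 - (2 - Real.sin θ) / 2) from rfl,
    expec_sub_smul, Wabcd_eval_x, outer_eval_x]
  have : ((2*((1+Real.cos θ)/2)*p^2 + ((1+Real.cos θ)/2)*e^4
      + 2*((2-Real.sin θ)/2)*p^2*e^2 + (1-(1+Real.cos θ)/2)*p^4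
      + (1-(1+Real.cos θ)/2) + 2*(2-(2-Real.sin θ)/2)*e^2
      - 2*p^2 - 4*p*e^2 : ℝ) : ℂ) - (lam:ℂ) * (((Complex.normSq x : ℝ):ℂ) * (e:ℂ)^4 / 2)
      = ((2*((1+Real.cos θ)/2)*p^2 + ((1+Real.cos θ)/2)*e^4
      + 2*((2-Real.sin θ)/2)*p^2*e^2 + (1-(1+Real.cos θ)/2)*p^4
      + (1-(1+Real.cos θ)/2) + 2*(2-(2-Real.sin θ)/2)*e^2
      - 2*p^2 - 4*p*e^2 - lam * Complex.normSq x * e^4 / 2 : ℝ) : ℂ) := by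
    push_cast
    ring
  rw [this, Complex.ofReal_re]

lemma comb_y (θ lam p e : ℝ) (x y : ℂ) :
    (expec (WII θ - (lam : ℂ) • outer (x • Psi1 + y • Psi2))
      (tensorVec ![1, 0, (p:ℂ), (e:ℂ)] ![(p:ℂ), 0, 1, (e:ℂ)])).re
    = 2*((1+Real.cos θ)/2)*p^2 + ((1+Real.cos θ)/2)*e^4
      + 2*((2-Real.sin θ)/2)*p^2*e^2 + (1-(1+Real.cos θ)/2)*p^4
      + (1-(1+Real.cos θ)/2) + 2*(2-(2-Real.sin θ)/2)*e^2
      - 2*p^2 - 4*p*e^2 - lam * Complex.normSq y * e^4 / 2 := by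
  rw [show WII θ = Wabcd ((1 + Real.cos θ) / 2) ((2 - Real.sin θ) / 2)
      (1 - (1 + Real.cos θ) / 2) (2 - (2 - Real.sin θ) / 2) from rfl,
    expec_sub_smul, Wabcd_eval_y, outer_eval_y]
  have : ((2*((1+Real.cos θ)/2)*p^2 + ((1+Real.cos θ)/2)*e^4
      + 2*((2-Real.sin θ)/2)*p^2*e^2 + (1-(1+Real.cos θ)/2)*p^4
      + (1-(1+Real.cos θ)/2) + 2*(2-(2-Real.sin θ)/2)*e^2
      - 2*p^2 - 4*p*e^2 : ℝ) : ℂ) - (lam:ℂ) * (((Complex.normSq y : ℝ):ℂ) * (e:ℂ)^4 / 2)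
      = ((2*((1+Real.cos θ)/2)*p^2 + ((1+Real.cos θ)/2)*e^4
      + 2*((2-Real.sin θ)/2)*p^2*e^2 + (1-(1+Real.cos θ)/2)*p^4
      + (1-(1+Real.cos θ)/2) + 2*(2-(2-Real.sin θ)/2)*e^2
      - 2*p^2 - 4*p*e^2 - lam * Complex.normSq y * e^4 / 2 : ℝ) : ℂ) := by
    push_cast
    ring
  rw [this, Complex.ofReal_re]

/-- The core real inequality. -/
lemma key_ineq (θ lam nx : ℝ) (hθ : θ ∈ Set.Ioc 0 π) (hlam : 0 < lam) (hnx : 0 < nx) :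
    ∃ p e : ℝ,
      2*((1+Real.cos θ)/2)*p^2 + ((1+Real.cos θ)/2)*e^4
      + 2*((2-Real.sin θ)/2)*p^2*e^2 + (1-(1+Real.cos θ)/2)*p^4
      + (1-(1+Real.cos θ)/2) + 2*(2-(2-Real.sin θ)/2)*e^2
      - 2*p^2 - 4*p*e^2 - lam * nx * e^4 / 2 < 0 := by
  set co := Real.cos θ with hco
  set si := Real.sin θ with hsi
  have hpy : si^2 + co^2 = 1 := Real.sin_sq_add_cos_sq θ
  have hconeg : -1 ≤ co := Real.neg_one_le_cos θ
  have hco1 : co ≤ 1 := Real.cos_le_one θ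
  have hsi1 : si ≤ 1 := Real.sin_le_one θ
  have hsi0 : 0 ≤ si := Real.sin_nonneg_of_mem_Icc ⟨hθ.1.le, hθ.2⟩
  by_cases hcase : 1 + co < lam * nx
  · -- μ = 0, e = 1
    refine ⟨1, 1, by nlinarith⟩
  · push_neg at hcase
    have hpos : 0 < 1 + co := lt_of_lt_of_le (by positivity) hcase
    have hθπ : θ < π := by
      rcases lt_or_eq_of_le hθ.2 with h | h
      · exact h
      · exfalso; rw [h] at hco; simp [Real.cos_pi] at hco; linarith [hco ▸ hpos]
    have hsipos : 0 < si := Real.sin_pos_of_pos_of_lt_pi hθ.1 hθπ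
    set K := 2 * si / (1 + co) with hK
    have hKpos : 0 < K := by positivity
    have haK : ((1 + co)/2) * K = si := by
      rw [hK]; field_simp
    set η := lam * nx / 2 with hη
    have hηpos : 0 < η := by positivity
    set μ := min 1 (η * K^2 / (2 * (5 + 2*K))) with hμ
    have hμpos : 0 < μ := by
      apply lt_min one_pos
      positivity
    have hμ1 : μ ≤ 1 := min_le_left _ _
    have hμ2 : μ * (2 * (5 + 2*K)) ≤ η * K^2 := by
      have h := min_le_right 1 (η * K^2 / (2 * (5 + 2*K)))
      rw [← hμ] at h
      calc μ * (2 * (5 + 2*K)) ≤ (η * K^2 / (2 * (5 + 2*K))) * (2 * (5 + 2*K)) := by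
            apply mul_le_mul_of_nonneg_right h; positivity
        _ = η * K^2 := by field_simp
    refine ⟨1 + μ, Real.sqrt (K * μ), ?_⟩
    have he2 : (Real.sqrt (K * μ))^2 = K * μ :=
      Real.sq_sqrt (by positivity)
    have he4 : (Real.sqrt (K * μ))^4 = (K * μ)^2 := by
      rw [show (4:ℕ) = 2*2 from rfl, pow_mul, he2]
    rw [he2, he4]
    -- key algebraic identity
    have hz : 4*(1-(1+co)/2) - 2*si*K + ((1+co)/2)*K^2 = 0 := by
      have h : ((1+co)/2) * (4*(1-(1+co)/2) - 2*si*K + ((1+co)/2)*K^2) = 0 := by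
        linear_combination (((1+co)/2)*K - si) * haK - hpy
      have hne : ((1+co)/2) ≠ 0 := by positivity
      exact (mul_eq_zero.mp h).resolve_left hne
    have heq : 2*((1+co)/2)*(1+μ)^2 + ((1+co)/2)*(K*μ)^2
        + 2*((2-si)/2)*(1+μ)^2*(K*μ) + (1-(1+co)/2)*(1+μ)^4
        + (1-(1+co)/2) + 2*(2-(2-si)/2)*(K*μ)
        - 2*(1+μ)^2 - 4*(1+μ)*(K*μ) - lam * nx * (K*μ)^2 / 2
        = μ^2 * (4*(1-(1+co)/2)*μ + (1-(1+co)/2)*μ^2 + 2*((2-si)/2)*K*μ - η*K^2) := by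
      rw [hη]
      linear_combination (μ^2) * hz
    rw [heq]
    apply mul_neg_of_pos_of_neg (pow_pos hμpos 2)
    -- bracket < 0
    have t1 : 4*(1-(1+co)/2)*μ ≤ 4*μ := by nlinarith
    have t2 : (1-(1+co)/2)*μ^2 ≤ μ := by nlinarith
    have t3 : 2*((2-si)/2)*K*μ ≤ 2*K*μ := by nlinarith [mul_nonneg hKpos.le hμpos.le]
    have t5 : 0 < η * K^2 := by positivity
    linarith


theorem WII_no_rank_one_subtraction (θ : ℝ) (hθ : θ ∈ Set.Ioc 0 π)
    (x y : ℂ) (hxy : (x, y) ≠ (0, 0)) (lam : ℝ) (hlam : 0 < lam) :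
    ∃ u v : Fin 4 → ℂ,
      (expec (WII θ - (lam : ℂ) • outer (x • Psi1 + y • Psi2))
        (tensorVec u v)).re < 0 := by
  have hxy' : x ≠ 0 ∨ y ≠ 0 := by
    by_contra h
    push_neg at h
    exact hxy (by simp [h.1, h.2])
  rcases hxy' with hx | hy
  · have hnx : 0 < Complex.normSq x := Complex.normSq_pos.mpr hx
    obtain ⟨p, e, hpe⟩ := key_ineq θ lam (Complex.normSq x) hθ hlam hnx
    exact ⟨![0, (p:ℂ), (e:ℂ), 1], ![0, 1, (e:ℂ), (p:ℂ)], by rw [comb_x]; exact hpe⟩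
  · have hny : 0 < Complex.normSq y := Complex.normSq_pos.mpr hy
    obtain ⟨p, e, hpe⟩ := key_ineq θ lam (Complex.normSq y) hθ hlam hny
    exact ⟨![1, 0, (p:ℂ), (e:ℂ)], ![(p:ℂ), 0, 1, (e:ℂ)], by rw [comb_y]; exact hpe⟩
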